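/- arXiv:2604.17394 — 2 statements merged into one kernel-verified Lean document; each statement's English description precedes it below -/
import Mathlib

section
/- Let Q be an integral (cancellative) commutative monoid such that its sharpification Q̄ = Q/Q^× is finitely generated and saturated. Then the canonical surjection π: Q → Q̄ admits a monoid section s: Q̄ → Q with π ∘ s = id. -/
/-!
The sharpification `Q̄` is sharp, so saturation makes it torsion-free: `a ^ n = b ^ n` gives
`a ∣ b` and `b ∣ a`, hence `a = b`. Being finitely generated, its group completion `Q̄^gp` is then
free abelian, so the surjection `Q^gp → Q̄^gp` has a group-theoretic section `σ`. Since `Q` is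
integral, the elements of `Q^gp` mapping into `Q̄` are exactly those of `Q`: if `π y = c` and
`σ c = a / b`, then `π a = π (y b)`, so `a = y b u` for a unit `u` and `σ c = y u`.
Hence `σ` restricts to a monoid section `Q̄ → Q`.
-/

open scoped TensorProduct

/-- The polynomial `P(X,Y) = ((X+Y)^p - X^p - Y^p)/p` evaluated at `a, b`. -/
def fwP {R : Type*} [CommRing R] (p : ℕ) (a b : R) : R :=
  ∑ i ∈ Finset.Ioo 0 p, (Nat.choose p i / p : ℕ) • (a ^ i * b ^ (p - i))

/-- A Frobenius–Witt derivation. -/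
structure IsFWDerivation {R M : Type*} [CommRing R] [AddCommGroup M] [Module R M]
    (p : ℕ) (D : R → M) : Prop where
  map_add' : ∀ a b : R, D (a + b) = D a + D b - fwP p a b • D (p : R)
  map_mul' : ∀ a b : R, D (a * b) = b ^ p • D a + a ^ p • D b

/-- A logarithmic Frobenius–Witt derivation of the prelog ring `(R, Q, α)`. -/
structure IsLogFWDerivation {R M Q : Type*} [CommRing R] [AddCommGroup M] [Module R M]
    [CommMonoid Q] (p : ℕ) (α : Q →* R) (D : R → M) (δ : Q → M) : Prop where
  toFW : IsFWDerivation p D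
  map_one' : δ 1 = 0
  map_mul' : ∀ x y : Q, δ (x * y) = δ x + δ y
  compat : ∀ x : Q, D (α x) = α x ^ p • δ x

/-- The congruence on `Q` identifying elements differing by a unit;
its quotient is the sharpification `Q̄ = Q/Q^×`. -/
def sharpCon (Q : Type*) [CommMonoid Q] : Con Q where
  r x y := ∃ u : Qˣ, x = y * u
  iseqv := by
    refine ⟨fun x => ⟨1, by simp⟩, ?_, ?_⟩
    · rintro x y ⟨u, rfl⟩; exact ⟨u⁻¹, by simp⟩
    · rintro x y z ⟨u, rfl⟩ ⟨v, rfl⟩; exact ⟨v * u, by rw [Units.val_mul, mul_assoc]⟩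
  mul' := by
    rintro a b c d ⟨u, rfl⟩ ⟨v, rfl⟩
    exact ⟨u * v, by rw [Units.val_mul]; exact mul_mul_mul_comm b u d v⟩

/-- An ideal of a commutative monoid. -/
def IsMonIdeal {Q : Type*} [CommMonoid Q] (I : Set Q) : Prop :=
  ∀ a x : Q, x ∈ I → a * x ∈ I

/-- A prime ideal of a commutative monoid: an ideal whose complement is a submonoid. -/
def IsPrimeMonIdeal {Q : Type*} [CommMonoid Q] (I : Set Q) : Prop :=
  IsMonIdeal I ∧ (1 : Q) ∉ I ∧ ∀ x y : Q, x * y ∈ I → x ∈ I ∨ y ∈ I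

/-- The dimension of a commutative monoid: the Krull dimension of its poset of prime ideals. -/
noncomputable def monDim (Q : Type*) [CommMonoid Q] : WithBot (WithTop ℕ) :=
  Order.krullDim {I : Set Q // IsPrimeMonIdeal I}

/-- A commutative monoid is integral (cancellative). -/
def IsIntegralMon (Q : Type*) [CommMonoid Q] : Prop :=
  ∀ a b c : Q, a * b = a * c → b = c

/-- A commutative monoid is saturated: it is integral and whenever `x ∈ Q^{gp}` satisfies
`x^n ∈ Q` for some `n > 0`, then `x ∈ Q`; intrinsically, `a^n ∣ b^n → a ∣ b`. -/
def IsSaturatedMon (Q : Type*) [CommMonoid Q] : Prop :=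
  IsIntegralMon Q ∧ ∀ (a b : Q) (n : ℕ), 0 < n → a ^ n ∣ b ^ n → a ∣ b

/-- A commutative monoid is sharp if its only unit is `1`. -/
def IsSharpMon (Q : Type*) [CommMonoid Q] : Prop :=
  ∀ x : Q, IsUnit x → x = 1

/-- The ideal `I_α` of a prelog ring `(R, Q, α)`, generated by `α(Q⁺)`. -/
def prelogIdeal {R Q : Type*} [CommRing R] [CommMonoid Q] (α : Q →* R) : Ideal R :=
  Ideal.span (α '' {x : Q | ¬ IsUnit x})

/-- A Noetherian local ring is regular: its maximal ideal (= the ideal of nonunits) is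
generated by `dim R` elements. -/
def IsRegularLocal (S : Type*) [CommRing S] : Prop :=
  IsNoetherianRing S ∧ IsLocalRing S ∧
    ∃ (n : ℕ) (s : Fin n → S),
      Ideal.span (Set.range s) = Ideal.span {x : S | ¬ IsUnit x} ∧
      ringKrullDim S = (n : WithBot (WithTop ℕ))

/-- Log regularity of a local prelog ring `(R, Q, α)`. -/
def IsLogRegular {R Q : Type*} [CommRing R] [CommMonoid Q] (α : Q →* R) : Prop :=
  IsRegularLocal (R ⧸ prelogIdeal α) ∧
    ringKrullDim R = ringKrullDim (R ⧸ prelogIdeal α) + (show WithBot ℕ∞ from monDim Q)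

open Algebra Function

section Saturated

variable {M : Type*} [CommMonoid M]

lemma IsSaturatedMon.eq_of_pow_eq (hsat : IsSaturatedMon M) (hsharp : IsSharpMon M)
    {a b : M} {n : ℕ} (hn : n ≠ 0) (h : a ^ n = b ^ n) : a = b := by
  obtain ⟨c, rfl⟩ := hsat.2 a b n (Nat.pos_of_ne_zero hn) (h ▸ dvd_rfl)
  obtain ⟨d, hd⟩ := hsat.2 (a * c) a n (Nat.pos_of_ne_zero hn) (h ▸ dvd_rfl)
  have hcd : c * d = 1 := (hsat.1 a _ _ (by rw [mul_one, ← mul_assoc, ← hd])).symm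
  rw [hsharp c (.of_mul_eq_one d hcd), mul_one]

lemma IsSaturatedMon.isMulTorsionFree (hsat : IsSaturatedMon M) (hsharp : IsSharpMon M) :
    IsMulTorsionFree M :=
  ⟨fun _ hn _ _ h => hsat.eq_of_pow_eq hsharp hn h⟩

end Saturated

section Sharpification

variable {Q : Type*} [CommMonoid Q]

lemma sharpCon_mk_eq_mk_iff {x y : Q} :
    ((x : (sharpCon Q).Quotient) = y) ↔ Associated x y := by
  rw [(sharpCon Q).eq]
  exact ⟨fun ⟨u, hu⟩ => ⟨u⁻¹, by rw [hu, Units.mul_inv_cancel_right]⟩,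
    fun ⟨u, hu⟩ => ⟨u⁻¹, by rw [← hu, Units.mul_inv_cancel_right]⟩⟩

lemma isSharpMon_sharpCon_quotient : IsSharpMon (sharpCon Q).Quotient := by
  intro x hx
  obtain ⟨y, hxy⟩ := isUnit_iff_exists_inv.mp hx
  induction x, y using Con.induction_on₂ with
  | _ q r =>
    rw [← Con.coe_mul] at hxy
    rw [← Con.coe_one, sharpCon_mk_eq_mk_iff, associated_one_iff_isUnit] at hxy ⊢
    exact isUnit_of_mul_isUnit_left hxy

end Sharpification

namespace Algebra.GrothendieckGroup

variable {M N : Type*} [CommMonoid M] [CommMonoid N]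

lemma exists_of_div_of (x : GrothendieckGroup M) : ∃ a b : M, of a / of b = x := by
  obtain ⟨a, b, rfl⟩ := (Localization.monoidOf ⊤).mk'_surjective x
  exact ⟨a, b, div_eq_of_eq_mul' ((Localization.monoidOf ⊤).mk'_spec' a b).symm⟩

lemma lift_of {G : Type*} [CommGroup G] (f : M →* G) (m : M) : lift f (of m) = f m := by
  rw [← MonoidHom.comp_apply, ← lift_symm_apply, Equiv.symm_apply_apply]

noncomputable def map (f : M →* N) : GrothendieckGroup M →* GrothendieckGroup N :=
  lift (of.comp f)

lemma map_of (f : M →* N) (m : M) : map f (of m) = of (f m) := lift_of _ m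

lemma map_surjective {f : M →* N} (hf : Surjective f) : Surjective (map f) := by
  intro z
  obtain ⟨a, b, rfl⟩ := exists_of_div_of z
  obtain ⟨⟨x, rfl⟩, ⟨y, rfl⟩⟩ := And.intro (hf a) (hf b)
  exact ⟨of x / of y, by rw [map_div, map_of, map_of]⟩

lemma exists_of_eq_of_map_eq_of [IsCancelMul N] {f : M →* N}
    (hf : ∀ a b, f a = f b → Associated a b) {g : GrothendieckGroup M} {y : M}
    (hg : map f g = of (f y)) : ∃ x, of x = g := by
  obtain ⟨a, b, rfl⟩ := exists_of_div_of g
  rw [map_div, map_of, map_of, div_eq_iff_eq_mul, ← map_mul, ← map_mul] at hg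
  obtain ⟨u, hu⟩ := hf a (y * b) (of_injective hg)
  refine ⟨y * ↑u⁻¹, eq_div_of_mul_eq' ?_⟩
  rw [← map_mul, mul_right_comm, ← hu, Units.mul_inv_cancel_right]

end Algebra.GrothendieckGroup

lemma MonoidHom.exists_comp_eq_id_of_free {G H : Type*} [CommGroup G] [CommGroup H]
    [Module.Free ℤ (Additive H)] {φ : G →* H} (hφ : Surjective φ) :
    ∃ σ : H →* G, φ.comp σ = .id H := by
  obtain ⟨σ, hσ⟩ := Module.projective_lifting_property (φ.toAdditive.toIntLinearMap)
    LinearMap.id hφ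
  exact ⟨MonoidHom.toAdditive.symm σ.toAddMonoidHom,
    MonoidHom.ext fun h => LinearMap.ext_iff.mp hσ (Additive.ofMul h)⟩

lemma MonoidHom.exists_comp_eq_of_injective {M N G : Type*} [MulOneClass M] [MulOneClass N]
    [MulOneClass G] {ι : M →* G} (hι : Injective ι) {g : N →* G} (hg : ∀ n, ∃ m, ι m = g n) :
    ∃ s : N →* M, ι.comp s = g := by
  choose s hs using hg
  refine ⟨{ toFun := s, map_one' := hι ?_, map_mul' := fun a b => hι ?_ }, MonoidHom.ext hs⟩
  · rw [hs, map_one, map_one]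
  · rw [hs, map_mul, map_mul, hs, hs]

open GrothendieckGroup in
theorem MonoidHom.exists_comp_eq_id_of_free_grothendieckGroup {M N : Type*} [CommMonoid M]
    [CommMonoid N] [IsCancelMul M] [IsCancelMul N] [Module.Free ℤ (Additive (GrothendieckGroup N))]
    {f : M →* N} (hf : Surjective f) (hker : ∀ a b, f a = f b → Associated a b) :
    ∃ s : N →* M, f.comp s = .id N := by
  obtain ⟨σ, hσ⟩ := MonoidHom.exists_comp_eq_id_of_free (map_surjective hf)
  obtain ⟨s, hs⟩ := MonoidHom.exists_comp_eq_of_injective (of_injective (M := M))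
    (g := σ.comp of) fun c => by
      obtain ⟨y, rfl⟩ := hf c
      exact exists_of_eq_of_map_eq_of hker (DFunLike.congr_fun hσ (of (f y)))
  refine ⟨s, MonoidHom.ext fun c => of_injective ?_⟩
  calc of (f (s c)) = map f (of (s c)) := (map_of f _).symm
    _ = map f (σ (of c)) := congrArg (map f) (DFunLike.congr_fun hs c)
    _ = of c := DFunLike.congr_fun hσ (of c)

/-- if `Q` is integral and its sharpification is finitely generated and
saturated, the canonical surjection `π : Q → Q̄` admits a monoid section. -/
theorem stmt1 {Q : Type*} [CommMonoid Q] (hint : IsIntegralMon Q)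
    (hfg : Monoid.FG (sharpCon Q).Quotient)
    (hsat : IsSaturatedMon (sharpCon Q).Quotient) :
    ∃ s : (sharpCon Q).Quotient →* Q,
      ((sharpCon Q).mk').comp s = MonoidHom.id (sharpCon Q).Quotient := by
  have : IsLeftCancelMul Q := ⟨hint⟩
  have : IsLeftCancelMul (sharpCon Q).Quotient := ⟨hsat.1⟩
  have := CommMagma.IsLeftCancelMul.toIsCancelMul Q
  have := CommMagma.IsLeftCancelMul.toIsCancelMul (sharpCon Q).Quotient
  have : IsMulTorsionFree (sharpCon Q).Quotient :=
    hsat.isMulTorsionFree isSharpMon_sharpCon_quotient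
  have : Group.FG (GrothendieckGroup (sharpCon Q).Quotient) :=
    Group.fg_iff_monoid_fg.mpr inferInstance
  exact MonoidHom.exists_comp_eq_id_of_free_grothendieckGroup Con.mk'_surjective
    fun _ _ => sharpCon_mk_eq_mk_iff.mp
end

section
/- Let (R,Q,α) be a prelog ring such that Q is integral and its sharpification Q̄ is fine and saturated, and let s: Q̄ → Q be a section of the canonical surjection π: Q → Q̄. Then for every R-module M, the map FDer_{(R,Q,α)}(M) → FDer_{(R,Q̄,α∘s)}(M), (D,δ) ↦ (D, δ∘s), is an isomorphism; consequently FΩ_{(R,Q̄,αs)} ≅ FΩ_{(R,Q,α)}. -/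
/-! The multiplicativity of `D` on units makes `(r⁻¹)^p • D r` a logarithmic derivative
`Rˣ → M`; a log FW-derivation is forced to equal it on units of `Q`. Over an integral `Q`, a section
`s` of `Q → Q̄` splits every `x` uniquely as `s (π x) * u x` with `u : Q →* Qˣ`, so `δ` is
determined by `δ ∘ s` and `D`, and conversely `δ' ↦ (dlog D ∘ α ∘ u) + δ' ∘ π` extends. -/

open scoped TensorProduct

section FWDerivation

variable {R M : Type*} [CommRing R] [AddCommGroup M] [Module R M] {p : ℕ} {D : R → M}

theorem IsFWDerivation.map_one (hD : IsFWDerivation p D) : D 1 = 0 := by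
  simpa using hD.map_mul' 1 1

variable (p D) in
def fwDlog (r : Rˣ) : M := ((r⁻¹ : Rˣ) : R) ^ p • D r

variable (p D) in
theorem pow_smul_fwDlog (r : Rˣ) : (r : R) ^ p • fwDlog p D r = D r := by
  rw [fwDlog, smul_smul, ← mul_pow, Units.mul_inv, one_pow, one_smul]

theorem IsFWDerivation.fwDlog_one (hD : IsFWDerivation p D) : fwDlog p D 1 = 0 := by
  simp [fwDlog, hD.map_one]

theorem IsFWDerivation.fwDlog_mul (hD : IsFWDerivation p D) (r t : Rˣ) :
    fwDlog p D (r * t) = fwDlog p D r + fwDlog p D t := by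
  have hr : (((r * t)⁻¹ : Rˣ) : R) ^ p * (t : R) ^ p = ((r⁻¹ : Rˣ) : R) ^ p := by
    rw [← mul_pow, ← Units.val_mul, mul_inv, inv_mul_cancel_right]
  have ht : (((r * t)⁻¹ : Rˣ) : R) ^ p * (r : R) ^ p = ((t⁻¹ : Rˣ) : R) ^ p := by
    rw [← mul_pow, ← Units.val_mul, mul_inv, mul_right_comm, inv_mul_cancel, one_mul]
  rw [fwDlog, Units.val_mul, hD.map_mul', smul_add, smul_smul, smul_smul, hr, ht]
  rfl

end FWDerivation

namespace IsLogFWDerivation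

variable {R M Q Q' : Type*} [CommRing R] [AddCommGroup M] [Module R M] [CommMonoid Q]
  [CommMonoid Q'] {p : ℕ} {α : Q →* R} {D : R → M} {δ : Q → M}

theorem comp (h : IsLogFWDerivation p α D δ) (f : Q' →* Q) :
    IsLogFWDerivation p (α.comp f) D (fun q => δ (f q)) where
  toFW := h.toFW
  map_one' := by rw [map_one, h.map_one']
  map_mul' x y := by rw [map_mul, h.map_mul']
  compat x := h.compat (f x)

theorem apply_units (h : IsLogFWDerivation p α D δ) (u : Qˣ) :
    δ u = fwDlog p D (Units.map α u) := by
  have hα : α u = (Units.map α u : R) := rfl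
  rw [fwDlog, ← hα, h.compat, hα, smul_smul, ← mul_pow, Units.inv_mul, one_pow, one_smul]

end IsLogFWDerivation

section Sharpification

variable {Q : Type*} [CommMonoid Q] {s : (sharpCon Q).Quotient →* Q}

theorem exists_eq_section_mk_mul_unit (hs : (sharpCon Q).mk'.comp s = MonoidHom.id _) (x : Q) :
    ∃ u : Qˣ, x = s ((sharpCon Q).mk' x) * u := by
  have hx : (sharpCon Q).mk' (s ((sharpCon Q).mk' x)) = (sharpCon Q).mk' x :=
    DFunLike.congr_fun hs _
  obtain ⟨u, hu⟩ := (sharpCon Q).eq.mp hx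
  exact ⟨u⁻¹, by rw [hu, Units.mul_inv_cancel_right]⟩

theorem IsIntegralMon.unit_eq_of_section_mul (hint : IsIntegralMon Q) {x : Q} {u v : Qˣ}
    (hu : x = s ((sharpCon Q).mk' x) * u) (hv : x = s ((sharpCon Q).mk' x) * v) : u = v :=
  Units.ext (hint _ _ _ (hu.symm.trans hv))

noncomputable def unitPart (hint : IsIntegralMon Q)
    (hs : (sharpCon Q).mk'.comp s = MonoidHom.id _) : Q →* Qˣ where
  toFun x := (exists_eq_section_mk_mul_unit hs x).choose
  map_one' := hint.unit_eq_of_section_mul (exists_eq_section_mk_mul_unit hs 1).choose_spec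
    (by rw [map_one, map_one, Units.val_one, one_mul])
  map_mul' x y := by
    refine hint.unit_eq_of_section_mul (exists_eq_section_mk_mul_unit hs (x * y)).choose_spec ?_
    conv_lhs => rw [(exists_eq_section_mk_mul_unit hs x).choose_spec,
      (exists_eq_section_mk_mul_unit hs y).choose_spec]
    rw [map_mul, map_mul, Units.val_mul, mul_mul_mul_comm]

variable (hint : IsIntegralMon Q) (hs : (sharpCon Q).mk'.comp s = MonoidHom.id _)

theorem eq_section_mk_mul_unitPart (x : Q) : x = s ((sharpCon Q).mk' x) * unitPart hint hs x :=
  (exists_eq_section_mk_mul_unit hs x).choose_spec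

theorem unitPart_section (q : (sharpCon Q).Quotient) : unitPart hint hs (s q) = 1 := by
  refine hint.unit_eq_of_section_mul (eq_section_mk_mul_unitPart hint hs (s q)) ?_
  rw [Units.val_one, mul_one, show (sharpCon Q).mk' (s q) = q from DFunLike.congr_fun hs q]

variable {R M : Type*} [CommRing R] [AddCommGroup M] [Module R M] (p : ℕ) (α : Q →* R)
  (D : R → M)

noncomputable def sharpLift (δ' : (sharpCon Q).Quotient → M) (x : Q) : M :=
  fwDlog p D (Units.map α (unitPart hint hs x)) + δ' ((sharpCon Q).mk' x)

variable {p α D}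

theorem sharpLift_section {δ' : (sharpCon Q).Quotient → M} (hD : IsFWDerivation p D)
    (q : (sharpCon Q).Quotient) : sharpLift hint hs p α D δ' (s q) = δ' q := by
  rw [sharpLift, unitPart_section, map_one, hD.fwDlog_one, zero_add,
    show (sharpCon Q).mk' (s q) = q from DFunLike.congr_fun hs q]

theorem isLogFWDerivation_sharpLift {δ' : (sharpCon Q).Quotient → M}
    (h' : IsLogFWDerivation p (α.comp s) D δ') :
    IsLogFWDerivation p α D (sharpLift hint hs p α D δ') where
  toFW := h'.toFW
  map_one' := by rw [← map_one s, sharpLift_section hint hs h'.toFW, h'.map_one']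
  map_mul' x y := by
    simp only [sharpLift, map_mul, h'.toFW.fwDlog_mul, h'.map_mul']
    abel
  compat x := by
    set a := α (s ((sharpCon Q).mk' x))
    set b := Units.map α (unitPart hint hs x)
    have hx : α x = a * b := by
      conv_lhs => rw [eq_section_mk_mul_unitPart hint hs x]
      rw [map_mul]; rfl
    have ha : D a = a ^ p • δ' ((sharpCon Q).mk' x) := h'.compat _
    rw [hx, h'.toFW.map_mul', ha, ← pow_smul_fwDlog p D b, sharpLift]
    module

theorem IsLogFWDerivation.eq_sharpLift {δ : Q → M} (h : IsLogFWDerivation p α D δ) :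
    δ = sharpLift hint hs p α D (fun q => δ (s q)) := by
  funext x
  conv_lhs => rw [eq_section_mk_mul_unitPart hint hs x]
  rw [h.map_mul', h.apply_units, sharpLift, add_comm]

end Sharpification

theorem stmt14_general (p : ℕ) {R Q : Type*} [CommRing R] [CommMonoid Q]
    (α : Q →* R) (hint : IsIntegralMon Q)
    (s : (sharpCon Q).Quotient →* Q)
    (hs : ((sharpCon Q).mk').comp s = MonoidHom.id (sharpCon Q).Quotient)
    {M : Type*} [AddCommGroup M] [Module R M] :
    (∀ (D : R → M) (δ : Q → M), IsLogFWDerivation p α D δ →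
      IsLogFWDerivation p (α.comp s) D (fun q => δ (s q))) ∧
    ∀ (D : R → M) (δ' : (sharpCon Q).Quotient → M),
      IsLogFWDerivation p (α.comp s) D δ' →
        ∃! δ : Q → M, IsLogFWDerivation p α D δ ∧ ∀ q, δ (s q) = δ' q := by
  refine ⟨fun D δ h => h.comp s, fun D δ' h' => ?_⟩
  refine ⟨sharpLift hint hs p α D δ', ⟨isLogFWDerivation_sharpLift hint hs h',
    sharpLift_section hint hs h'.toFW⟩, ?_⟩
  rintro δ ⟨hδ, hδs⟩
  rw [hδ.eq_sharpLift hint hs, funext hδs]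

/-- for a section `s : Q̄ → Q` of the sharpification, composing with `s`
gives a bijection between log FW-derivations of `(R,Q,α)` and of `(R,Q̄,αs)`. -/
theorem stmt14 (p : ℕ) (hp : p.Prime) {R Q : Type*} [CommRing R] [CommMonoid Q]
    (α : Q →* R) (hint : IsIntegralMon Q)
    (hfg : Monoid.FG (sharpCon Q).Quotient) (hsat : IsSaturatedMon (sharpCon Q).Quotient)
    (s : (sharpCon Q).Quotient →* Q)
    (hs : ((sharpCon Q).mk').comp s = MonoidHom.id (sharpCon Q).Quotient)
    {M : Type*} [AddCommGroup M] [Module R M] :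
    (∀ (D : R → M) (δ : Q → M), IsLogFWDerivation p α D δ →
      IsLogFWDerivation p (α.comp s) D (fun q => δ (s q))) ∧
    ∀ (D : R → M) (δ' : (sharpCon Q).Quotient → M),
      IsLogFWDerivation p (α.comp s) D δ' →
        ∃! δ : Q → M, IsLogFWDerivation p α D δ ∧ ∀ q, δ (s q) = δ' q :=
  stmt14_general p α hint s hs
end
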